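/- arXiv:1702.01112 — 2 statements merged into one kernel-verified Lean document; each statement's English description precedes it below -/
import Mathlib

section
/- (Optimal-value characterization via KKT points, the essence of Theorem 1.) Let A : Matrix (Fin m) (Fin n) ℝ, b : Fin m → ℝ, c : Fin n → ℝ, and suppose the feasible set S = {y : Fin n → ℝ | A.mulVec y ≤ b} is nonempty and the set {c ⬝ᵥ y | y ∈ S} is bounded below. Then for every real ε, the inequality ε ≤ sInf {c ⬝ᵥ y | y ∈ S} holds if and only if there exist y : Fin n → ℝ and μ : Fin m → ℝ such that A.mulVec y ≤ b, 0 ≤ μ, Aᵀ.mulVec μ = −c, μ i * ((A.mulVec y) i − b i) = 0 for every i : Fin m, and ε ≤ c ⬝ᵥ y. -/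
open Matrix

/-!
Complementary slackness says exactly that the duality gap
`c ⬝ᵥ y + b ⬝ᵥ μ = μ ⬝ᵥ (b - A *ᵥ y)`, a sum of nonnegative terms, vanishes. Hence a KKT pair
consists of a primal and a dual optimum, and the backward direction is weak duality. The forward
direction is strong duality with attainment: the affine Farkas lemma, applied to the primal,
gives a dual solution of value at least the infimum, and applied to the dual (written as a system
of inequalities), a primal solution of value at most the infimum. The affine Farkas lemma follows
by homogenization from Farkas' lemma for a finitely generated cone, which is Hahn–Banach
separation once the cone is known to be closed. Closedness comes from conic Carathéodory: every
point of the cone is a nonnegative combination of linearly independent generators, and the cone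
over linearly independent vectors is the image of the closed orthant under a closed embedding.
-/

section ConicCaratheodory

open Function Set

variable {ι E : Type*} [Fintype ι]

theorem exists_sub_smul_nonneg_support_ssubset {w g : ι → ℝ} (hw : 0 ≤ w)
    (hg : support g ⊆ support w) (hpos : ∃ i, 0 < g i) :
    ∃ t : ℝ, 0 ≤ w - t • g ∧ support (w - t • g) ⊂ support w := by
  obtain ⟨i₀, hi₀, hmin⟩ := Finset.exists_min_image (Finset.univ.filter (0 < g ·))
    (fun i => w i / g i) (by simpa [Finset.Nonempty] using hpos)
  simp only [Finset.mem_filter, Finset.mem_univ, true_and] at hi₀ hmin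
  refine ⟨w i₀ / g i₀, fun i => ?_, ?_⟩
  · simp only [Pi.zero_apply, Pi.sub_apply, Pi.smul_apply, smul_eq_mul, sub_nonneg]
    rcases lt_or_ge 0 (g i) with hgi | hgi
    · exact (le_div_iff₀ hgi).mp (hmin i hgi)
    · exact (mul_nonpos_of_nonneg_of_nonpos (div_nonneg (hw i₀) hi₀.le) hgi).trans (hw i)
  · refine (ssubset_iff_of_subset fun i hi => ?_).mpr ⟨i₀, hg hi₀.ne', ?_⟩
    · by_contra hwi
      have hgi : g i = 0 := notMem_support.mp fun h => hwi (hg h)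
      simp [notMem_support.mp hwi, hgi] at hi
    · simp [div_mul_cancel₀ _ hi₀.ne']

variable [AddCommGroup E] [Module ℝ E]

theorem exists_nonneg_linearIndepOn_support (v : ι → E) {w : ι → ℝ} (hw : 0 ≤ w) :
    ∃ w' : ι → ℝ, 0 ≤ w' ∧ LinearIndepOn ℝ v (support w') ∧
      ∑ i, w' i • v i = ∑ i, w i • v i := by
  induction hn : (support w).ncard using Nat.strong_induction_on generalizing w with
  | _ n ih =>
  by_cases hli : LinearIndepOn ℝ v (support w)
  · exact ⟨w, hw, hli, rfl⟩
  obtain ⟨s, g, hsw, hgs, hgv, i, his, hgi⟩ : ∃ (s : Finset ι) (g : ι → ℝ), ↑s ⊆ support w ∧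
      (∀ i ∉ s, g i = 0) ∧ ∑ i ∈ s, g i • v i = 0 ∧ ∃ i ∈ s, g i ≠ 0 := by
    simpa [linearIndepOn_iff''] using hli
  have hg : support g ⊆ support w := fun j hj => hsw (by_contra fun h => hj (hgs j h))
  have hgv' : ∑ j, g j • v j = 0 := by
    rw [← hgv, Finset.sum_subset (Finset.subset_univ s) fun j _ hj => by simp [hgs j hj]]
  obtain ⟨g, hg, hgv, hpos⟩ : ∃ g : ι → ℝ, support g ⊆ support w ∧ ∑ j, g j • v j = 0 ∧
      ∃ j, 0 < g j := by
    rcases hgi.lt_or_gt with hneg | hpos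
    · exact ⟨-g, by simpa using hg, by simp [neg_smul, hgv'], i, by simpa using hneg⟩
    · exact ⟨g, hg, hgv', i, hpos⟩
  obtain ⟨t, hnonneg, hssub⟩ := exists_sub_smul_nonneg_support_ssubset hw hg hpos
  obtain ⟨w', hw', hli', hsum⟩ := ih _ (hn ▸ ncard_lt_ncard hssub) hnonneg rfl
  refine ⟨w', hw', hli', hsum.trans ?_⟩
  simp [sub_smul, Finset.sum_sub_distrib, mul_smul, ← Finset.smul_sum, hgv]

end ConicCaratheodory

namespace PointedCone

open Function Set

variable {ι E : Type*} [Fintype ι] [AddCommGroup E] [Module ℝ E]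

theorem mem_hull_range_iff {v : ι → E} {x : E} :
    x ∈ hull ℝ (range v) ↔ ∃ w : ι → ℝ, 0 ≤ w ∧ ∑ i, w i • v i = x := by
  rw [hull, Submodule.mem_span_range_iff_exists_fun]
  constructor
  · rintro ⟨c, rfl⟩
    exact ⟨fun i => c i, fun i => (c i).2, rfl⟩
  · rintro ⟨w, hw, rfl⟩
    exact ⟨fun i => ⟨w i, hw i⟩, rfl⟩

theorem exists_linearIndepOn_of_mem_hull_range {v : ι → E} {x : E}
    (hx : x ∈ hull ℝ (range v)) : ∃ s : Set ι, LinearIndepOn ℝ v s ∧ x ∈ hull ℝ (v '' s) := by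
  obtain ⟨w, hw, rfl⟩ := mem_hull_range_iff.mp hx
  obtain ⟨w', hw', hli, hsum⟩ := exists_nonneg_linearIndepOn_support v hw
  refine ⟨support w', hli, hsum ▸ Submodule.sum_mem _ fun i _ => ?_⟩
  by_cases hi : w' i = 0
  · simp [hi]
  · exact Submodule.smul_mem _ ⟨w' i, hw' i⟩
      (subset_hull (mem_image_of_mem v (mem_support.mpr hi)))

variable [TopologicalSpace E] [IsTopologicalAddGroup E] [ContinuousSMul ℝ E] [T2Space E]

theorem isClosed_hull_range_of_linearIndependent {κ : Type*} [Finite κ] {u : κ → E}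
    (hu : LinearIndependent ℝ u) : IsClosed (hull ℝ (range u) : Set E) := by
  have := Fintype.ofFinite κ
  have hcone : (hull ℝ (range u) : Set E) = Fintype.linearCombination ℝ u '' {w | 0 ≤ w} := by
    ext x
    simp [mem_hull_range_iff, Fintype.linearCombination_apply]
  rw [hcone]
  refine (LinearMap.isClosedEmbedding_of_injective ?_).isClosedMap _ isClosed_Ici
  exact LinearMap.ker_eq_bot.mpr (linearIndependent_iff_injective_fintypeLinearCombination.mp hu)

theorem isClosed_hull_range (v : ι → E) : IsClosed (hull ℝ (range v) : Set E) := by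
  have hunion : (hull ℝ (range v) : Set E) =
      ⋃ (s : Set ι) (_ : LinearIndepOn ℝ v s), hull ℝ (v '' s) := by
    refine subset_antisymm (fun x hx => ?_) (iUnion₂_subset fun s _ => ?_)
    · obtain ⟨s, hs, hxs⟩ := exists_linearIndepOn_of_mem_hull_range hx
      exact mem_iUnion₂.mpr ⟨s, hs, hxs⟩
    · exact Submodule.span_mono (image_subset_range v s)
  rw [hunion]
  refine isClosed_iUnion_of_finite fun s => isClosed_iUnion_of_finite fun hs => ?_
  rw [image_eq_range]
  exact isClosed_hull_range_of_linearIndependent hs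

/-- **Farkas' lemma** for a finitely generated cone. -/
theorem mem_hull_range_or_exists_dual_nonneg [LocallyConvexSpace ℝ E] (v : ι → E) (t : E) :
    t ∈ hull ℝ (range v) ∨ ∃ φ : StrongDual ℝ E, (∀ i, 0 ≤ φ (v i)) ∧ φ t < 0 := by
  refine or_iff_not_imp_left.mpr fun ht => ?_
  let C : ProperCone ℝ E := ⟨hull ℝ (range v), isClosed_hull_range v⟩
  obtain ⟨φ, hφ, hφt⟩ := C.hyperplane_separation_point ht
  exact ⟨φ, fun i => hφ _ (subset_hull (mem_range_self i)), hφt⟩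

end PointedCone

theorem LinearMap.apply_prod_eq_dotProduct_add_mul {η : Type*} [Fintype η] [DecidableEq η]
    (φ : (η → ℝ) × ℝ →ₗ[ℝ] ℝ) (x : η → ℝ) (r : ℝ) :
    φ (x, r) = (fun j => φ (Pi.single j 1, 0)) ⬝ᵥ x + r * φ (0, 1) := by
  have hx := congrArg (φ.comp (LinearMap.inl ℝ _ ℝ)) (pi_eq_sum_univ' x)
  rw [show (x, r) = (x, 0) + r • ((0 : η → ℝ), (1 : ℝ)) by simp, map_add, map_smul, smul_eq_mul]
  simpa [dotProduct, mul_comm] using hx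

section LinearProgramming

variable {ι η : Type*} [Fintype η] (A : Matrix ι η ℝ) (b : ι → ℝ) (c : η → ℝ)

theorem exists_feasible_dotProduct_lt {y d : η → ℝ} (hy : A *ᵥ y ≤ b) (hd : 0 ≤ A *ᵥ d)
    (hcd : 0 < c ⬝ᵥ d) (δ : ℝ) : ∃ z, A *ᵥ z ≤ b ∧ c ⬝ᵥ z < δ := by
  set T := (|c ⬝ᵥ y - δ| + 1) / (c ⬝ᵥ d)
  have hT : 0 ≤ T := by positivity
  refine ⟨y - T • d, fun i => ?_, ?_⟩
  · have := mul_nonneg hT (hd i)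
    simp only [mulVec_sub, mulVec_smul, Pi.sub_apply, Pi.smul_apply, smul_eq_mul]
    linarith [hy i]
  · rw [dotProduct_sub, dotProduct_smul, smul_eq_mul, div_mul_cancel₀ _ hcd.ne']
    linarith [le_abs_self (c ⬝ᵥ y - δ)]

variable [Fintype ι]

theorem dotProduct_add_dotProduct_eq_dotProduct_sub_mulVec {μ : ι → ℝ} (hμ : Aᵀ *ᵥ μ = -c)
    (y : η → ℝ) : c ⬝ᵥ y + b ⬝ᵥ μ = μ ⬝ᵥ (b - A *ᵥ y) := by
  rw [dotProduct_sub, dotProduct_mulVec, ← mulVec_transpose, hμ, neg_dotProduct,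
    dotProduct_comm μ b, dotProduct_comm c y]
  ring

theorem neg_dotProduct_le_dotProduct {μ : ι → ℝ} (hμ : 0 ≤ μ) (hμc : Aᵀ *ᵥ μ = -c)
    {y : η → ℝ} (hy : A *ᵥ y ≤ b) : -(b ⬝ᵥ μ) ≤ c ⬝ᵥ y := by
  have := dotProduct_add_dotProduct_eq_dotProduct_sub_mulVec A b c hμc y
  linarith [dotProduct_nonneg_of_nonneg hμ (sub_nonneg.mpr hy)]

/-- **Farkas' lemma**, affine form. -/
theorem exists_dual_feasible_of_forall_le {δ : ℝ} (hfeas : ∃ y, A *ᵥ y ≤ b)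
    (hδ : ∀ y, A *ᵥ y ≤ b → δ ≤ c ⬝ᵥ y) :
    ∃ μ, 0 ≤ μ ∧ Aᵀ *ᵥ μ = -c ∧ δ ≤ -(b ⬝ᵥ μ) := by
  classical
  -- `(-c, -δ)` should be a nonnegative combination of the `(A i, b i)` and of `(0, 1)`
  let v : Option ι → (η → ℝ) × ℝ := fun o => o.elim (0, 1) fun i => (A i, b i)
  rcases PointedCone.mem_hull_range_or_exists_dual_nonneg v (-c, -δ) with hmem | ⟨φ, hφ, hφt⟩
  · obtain ⟨w, hw, hsum⟩ := PointedCone.mem_hull_range_iff.mp hmem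
    simp only [v, Fintype.sum_option, Option.elim, Prod.ext_iff, Prod.fst_add, Prod.snd_add,
      Prod.fst_sum, Prod.snd_sum, Prod.smul_mk, smul_zero, smul_eq_mul, mul_one, zero_add]
      at hsum
    refine ⟨fun i => w (some i), fun i => hw _, ?_, ?_⟩
    · rw [mulVec_transpose, vecMul_eq_sum, hsum.1]
    · have : 0 ≤ w none := hw none
      simp only [dotProduct, mul_comm (b _)]
      linarith [hsum.2]
  · set d : η → ℝ := fun j => φ (Pi.single j 1, 0)
    set s := φ (0, 1)
    have hφ_apply (x : η → ℝ) (r : ℝ) : φ (x, r) = d ⬝ᵥ x + r * s :=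
      LinearMap.apply_prod_eq_dotProduct_add_mul (φ : _ →ₗ[ℝ] ℝ) x r
    have hs : 0 ≤ s := hφ none
    have hrow : ∀ i, 0 ≤ (A *ᵥ d) i + b i * s := fun i => by
      simpa [v, hφ_apply, mulVec, dotProduct_comm] using hφ (some i)
    have hcd : -(c ⬝ᵥ d) - δ * s < 0 := by
      simpa [hφ_apply, dotProduct_comm, sub_eq_add_neg] using hφt
    obtain ⟨y₀, hy₀⟩ := hfeas
    rcases hs.lt_or_eq with hs | hs
    -- for `s > 0` the point `-s⁻¹ • d` is feasible with value below `δ`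
    · refine absurd (hδ (-s⁻¹ • d) fun i => ?_) (not_le.mpr ?_)
      · have := hrow i
        simp only [mulVec_smul, Pi.smul_apply, smul_eq_mul, neg_mul]
        rw [neg_le, ← div_eq_inv_mul, le_div_iff₀ hs]
        linarith
      · rw [dotProduct_smul, smul_eq_mul, neg_mul, neg_lt, ← div_eq_inv_mul, lt_div_iff₀ hs]
        linarith
    -- for `s = 0` the objective is unbounded below along `-d`
    · obtain ⟨z, hz, hcz⟩ := exists_feasible_dotProduct_lt A b c hy₀
        (d := d) (fun i => by simpa [← hs] using hrow i) (by simp [← hs] at hcd; linarith) δ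
      exact absurd (hδ z hz) (not_le.mpr hcz)

theorem exists_feasible_dotProduct_le_of_forall_dual {δ : ℝ}
    (hdual : ∃ μ, 0 ≤ μ ∧ Aᵀ *ᵥ μ = -c)
    (hδ : ∀ μ, 0 ≤ μ → Aᵀ *ᵥ μ = -c → -(b ⬝ᵥ μ) ≤ δ) :
    ∃ y, A *ᵥ y ≤ b ∧ c ⬝ᵥ y ≤ δ := by
  classical
  -- the dual constraints as a system of inequalities `G *ᵥ μ ≤ h`
  let G : Matrix (ι ⊕ η ⊕ η) ι ℝ := fromRows (-1) (fromRows Aᵀ (-Aᵀ))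
  let h : ι ⊕ η ⊕ η → ℝ := Sum.elim 0 (Sum.elim (-c) c)
  have hG : ∀ μ, G *ᵥ μ ≤ h ↔ 0 ≤ μ ∧ Aᵀ *ᵥ μ = -c := by
    intro μ
    simp only [G, h, fromRows_mulVec, Sum.elim_le_elim_iff, neg_mulVec, one_mulVec, neg_nonpos]
    rw [neg_le, ← le_antisymm_iff]
  obtain ⟨ν, hν, hνG, hνh⟩ := exists_dual_feasible_of_forall_le G h b (δ := -δ)
    (by simpa only [hG] using hdual) fun μ hμ => by
      rw [hG] at hμ; linarith [hδ μ hμ.1 hμ.2]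
  set p : ι → ℝ := fun i => ν (Sum.inl i)
  set r : η → ℝ := fun j => ν (Sum.inr (Sum.inl j))
  set s : η → ℝ := fun j => ν (Sum.inr (Sum.inr j))
  have hA : A *ᵥ (s - r) = b - p := by
    rw [mulVec_transpose, vecMul_fromRows, vecMul_fromRows] at hνG
    simp only [vecMul_neg, vecMul_one, vecMul_transpose] at hνG
    change -p + (A *ᵥ r + -(A *ᵥ s)) = -b at hνG
    rw [mulVec_sub]
    ext i
    have := congrFun hνG i
    simp only [Pi.add_apply, Pi.neg_apply, Pi.sub_apply] at this ⊢
    linarith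
  have hc : h ⬝ᵥ ν = c ⬝ᵥ (s - r) := by
    simp [h, dotProduct, Fintype.sum_sum_type, r, s, Finset.sum_sub_distrib, mul_sub]
    ring
  refine ⟨s - r, fun i => ?_, by linarith⟩
  rw [hA, Pi.sub_apply, sub_le_self_iff]
  exact hν _

end LinearProgramming

section KKT

variable {ι η : Type*} [Fintype ι] [Fintype η] {A : Matrix ι η ℝ} {b : ι → ℝ} {c : η → ℝ}

variable (A b c) in
structure IsKKTPoint (y : η → ℝ) (μ : ι → ℝ) : Prop where
  feasible : A *ᵥ y ≤ b
  nonneg : 0 ≤ μ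
  stationary : Aᵀ *ᵥ μ = -c
  complementary : ∀ i, μ i * ((A *ᵥ y) i - b i) = 0

theorem dotProduct_sub_mulVec_eq_zero_iff {μ : ι → ℝ} {y : η → ℝ} (hμ : 0 ≤ μ)
    (hy : A *ᵥ y ≤ b) : μ ⬝ᵥ (b - A *ᵥ y) = 0 ↔ ∀ i, μ i * ((A *ᵥ y) i - b i) = 0 := by
  simp only [dotProduct, Pi.sub_apply]
  rw [Finset.sum_eq_zero_iff_of_nonneg fun i _ => mul_nonneg (hμ i) (sub_nonneg.mpr (hy i))]
  simp [mul_sub, sub_eq_zero, eq_comm]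

theorem IsKKTPoint.dotProduct_eq {y : η → ℝ} {μ : ι → ℝ} (h : IsKKTPoint A b c y μ) :
    c ⬝ᵥ y = -(b ⬝ᵥ μ) := by
  have := dotProduct_add_dotProduct_eq_dotProduct_sub_mulVec A b c h.stationary y
  rw [(dotProduct_sub_mulVec_eq_zero_iff h.nonneg h.feasible).mpr h.complementary] at this
  linarith

theorem IsKKTPoint.dotProduct_le {y : η → ℝ} {μ : ι → ℝ} (h : IsKKTPoint A b c y μ)
    {z : η → ℝ} (hz : A *ᵥ z ≤ b) : c ⬝ᵥ y ≤ c ⬝ᵥ z :=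
  h.dotProduct_eq ▸ neg_dotProduct_le_dotProduct A b c h.nonneg h.stationary hz

theorem isKKTPoint_of_dotProduct_le {y : η → ℝ} {μ : ι → ℝ} (hy : A *ᵥ y ≤ b) (hμ : 0 ≤ μ)
    (hμc : Aᵀ *ᵥ μ = -c) (hle : c ⬝ᵥ y ≤ -(b ⬝ᵥ μ)) : IsKKTPoint A b c y μ := by
  refine ⟨hy, hμ, hμc, (dotProduct_sub_mulVec_eq_zero_iff hμ hy).mp (le_antisymm ?_ ?_)⟩
  · rw [← dotProduct_add_dotProduct_eq_dotProduct_sub_mulVec A b c hμc]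
    linarith
  · exact dotProduct_nonneg_of_nonneg hμ (sub_nonneg.mpr hy)

variable (A b c) in
theorem exists_isKKTPoint (hne : {y | A *ᵥ y ≤ b}.Nonempty)
    (hbdd : BddBelow ((c ⬝ᵥ ·) '' {y | A *ᵥ y ≤ b})) : ∃ y μ, IsKKTPoint A b c y μ := by
  obtain ⟨μ, hμ, hμc, hinfμ⟩ := exists_dual_feasible_of_forall_le A b c hne
    fun y hy => csInf_le hbdd ⟨y, hy, rfl⟩
  obtain ⟨y, hy, hyμ⟩ := exists_feasible_dotProduct_le_of_forall_dual A b c ⟨μ, hμ, hμc⟩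
    fun μ' hμ' hμ'c => (le_csInf (hne.image _) (Set.forall_mem_image.mpr fun z hz =>
      neg_dotProduct_le_dotProduct A b c hμ' hμ'c hz)).trans hinfμ
  exact ⟨y, μ, isKKTPoint_of_dotProduct_le hy hμ hμc hyμ⟩

end KKT

/-- Optimal-value characterization via KKT points (essence of Theorem 1): for a
feasible, bounded-below linear program, `ε` lower-bounds the optimal value iff some
primal-dual pair satisfies the KKT system with objective value at least `ε`. -/
theorem inf_lower_bound_iff_kkt_point
    (m n : ℕ) (A : Matrix (Fin m) (Fin n) ℝ) (b : Fin m → ℝ) (c : Fin n → ℝ)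
    (hne : {y : Fin n → ℝ | A.mulVec y ≤ b}.Nonempty)
    (hbdd : BddBelow ((fun y => c ⬝ᵥ y) '' {y : Fin n → ℝ | A.mulVec y ≤ b}))
    (ε : ℝ) :
    ε ≤ sInf ((fun y => c ⬝ᵥ y) '' {y : Fin n → ℝ | A.mulVec y ≤ b}) ↔
      ∃ (y : Fin n → ℝ) (μ : Fin m → ℝ),
        A.mulVec y ≤ b ∧ 0 ≤ μ ∧ Aᵀ.mulVec μ = -c ∧
        (∀ i : Fin m, μ i * ((A.mulVec y) i - b i) = 0) ∧ ε ≤ c ⬝ᵥ y := by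
  constructor
  · intro hε
    obtain ⟨y, μ, h⟩ := exists_isKKTPoint A b c hne hbdd
    exact ⟨y, μ, h.feasible, h.nonneg, h.stationary, h.complementary,
      hε.trans (csInf_le hbdd ⟨y, h.feasible, rfl⟩)⟩
  · rintro ⟨y, μ, hy, hμ, hμc, hcompl, hεy⟩
    exact le_csInf (hne.image _) (Set.forall_mem_image.mpr fun z hz =>
      hεy.trans (IsKKTPoint.dotProduct_le ⟨hy, hμ, hμc, hcompl⟩ hz))
end

section
/- (Attainment for linear programs over polyhedra.) Let A : Matrix (Fin m) (Fin n) ℝ, b : Fin m → ℝ, c : Fin n → ℝ. Suppose the feasible set S = {x : Fin n → ℝ | A.mulVec x ≤ b} is nonempty and the set of objective values {c ⬝ᵥ x | x ∈ S} is bounded below. Then there exists x* ∈ S such that c ⬝ᵥ x* ≤ c ⬝ᵥ x for every x ∈ S. -/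
open Matrix

open Finset in
/-- One step of Fourier–Motzkin elimination for a parametric system of linear
inequalities: eliminate the first variable. -/
lemma fm_elim_var {ι : Type} [Fintype ι] {n : ℕ} (A : ι → Fin (n+1) → ℝ) (c b : ι → ℝ) :
    ∃ (A' : ι ⊕ ι × ι → Fin n → ℝ) (c' b' : ι ⊕ ι × ι → ℝ),
      ∀ (t : ℝ) (y : Fin n → ℝ),
        (∀ k, A' k ⬝ᵥ y + c' k * t ≤ b' k) ↔
          ∃ s : ℝ, ∀ i, A i ⬝ᵥ (Fin.cons s y) + c i * t ≤ b i := by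
  classical
  set a : ι → ℝ := fun i => A i 0 with ha
  set r : ι → Fin n → ℝ := fun i => A i ∘ Fin.succ with hr
  refine ⟨Sum.elim (fun i => if a i = 0 then r i else 0)
      (fun p => if 0 < a p.1 ∧ a p.2 < 0 then a p.1 • r p.2 - a p.2 • r p.1 else 0),
    Sum.elim (fun i => if a i = 0 then c i else 0)
      (fun p => if 0 < a p.1 ∧ a p.2 < 0 then a p.1 * c p.2 - a p.2 * c p.1 else 0),
    Sum.elim (fun i => if a i = 0 then b i else 0)
      (fun p => if 0 < a p.1 ∧ a p.2 < 0 then a p.1 * b p.2 - a p.2 * b p.1 else 0),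
    fun t y => ?_⟩
  have hdot : ∀ (s : ℝ) (i : ι), A i ⬝ᵥ (Fin.cons s y) = a i * s + r i ⬝ᵥ y := by
    intro s i
    simp [dotProduct, Fin.sum_univ_succ, ha, hr]
  set g : ι → ℝ := fun i => b i - r i ⬝ᵥ y - c i * t with hg
  have horig : ∀ (s : ℝ) (i : ι),
      (A i ⬝ᵥ (Fin.cons s y) + c i * t ≤ b i) ↔ a i * s ≤ g i := by
    intro s i; rw [hdot]; simp only [hg]; constructor <;> intro h <;> linarith
  constructor
  · intro H
    have hz : ∀ i, a i = 0 → (0:ℝ) ≤ g i := by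
      intro i h0
      have h1 := H (Sum.inl i)
      simp only [Sum.elim_inl, if_pos h0] at h1
      simp only [hg]
      linarith [h1]
    have hp : ∀ i j, 0 < a i → a j < 0 → a j * g i ≤ a i * g j := by
      intro i j hi hj
      have hcond : 0 < a i ∧ a j < 0 := ⟨hi, hj⟩
      have h1 := H (Sum.inr (i, j))
      simp only [Sum.elim_inr] at h1
      rw [if_pos hcond, if_pos hcond, if_pos hcond] at h1
      rw [sub_dotProduct, smul_dotProduct, smul_dotProduct] at h1
      simp only [smul_eq_mul] at h1
      simp only [hg]
      nlinarith [h1]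
    -- choose s
    set Pos : Finset ι := Finset.univ.filter (fun i => 0 < a i) with hPos
    set Neg : Finset ι := Finset.univ.filter (fun i => a i < 0) with hNeg
    by_cases hP : Pos.Nonempty
    · refine ⟨Pos.inf' hP (fun i => g i / a i), fun i => (horig _ i).2 ?_⟩
      rcases lt_trichotomy (a i) 0 with h | h | h
      · have hne' : a i ≠ 0 := h.ne
        have hle : g i / a i ≤ Pos.inf' hP (fun j => g j / a j) := by
          apply Finset.le_inf'
          intro j hj
          have hj' : 0 < a j := by simpa [hPos] using hj
          have key := hp j i hj' h
          have e1 : a i * (g i / a i) = g i := by field_simp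
          have e2 : a j * (g j / a j) = g j := by field_simp
          have h3 : a i * a j * (g j / a j) ≤ a i * a j * (g i / a i) := by
            calc a i * a j * (g j / a j) = a i * (a j * (g j / a j)) := by ring
              _ = a i * g j := by rw [e2]
              _ ≤ a j * g i := key
              _ = a j * (a i * (g i / a i)) := by rw [e1]
              _ = a i * a j * (g i / a i) := by ring
          nlinarith [h3, mul_neg_of_neg_of_pos h hj']
        have e1 : a i * (g i / a i) = g i := by field_simp
        nlinarith [mul_le_mul_of_nonpos_left hle h.le, e1]
      · rw [h, zero_mul]; exact hz i h
      · have hne' : a i ≠ 0 := h.ne'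
        have hmem : i ∈ Pos := by simp [hPos, h]
        have hle : Pos.inf' hP (fun j => g j / a j) ≤ g i / a i :=
          Finset.inf'_le (fun j => g j / a j) hmem
        have e1 : a i * (g i / a i) = g i := by field_simp
        nlinarith [mul_le_mul_of_nonneg_left hle h.le, e1]
    · by_cases hN : Neg.Nonempty
      · refine ⟨Neg.sup' hN (fun i => g i / a i), fun i => (horig _ i).2 ?_⟩
        rcases lt_trichotomy (a i) 0 with h | h | h
        · have hne' : a i ≠ 0 := h.ne
          have hmem : i ∈ Neg := by simp [hNeg, h]
          have hle : g i / a i ≤ Neg.sup' hN (fun j => g j / a j) :=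
            Finset.le_sup' (fun j => g j / a j) hmem
          have e1 : a i * (g i / a i) = g i := by field_simp
          nlinarith [mul_le_mul_of_nonpos_left hle h.le, e1]
        · rw [h, zero_mul]; exact hz i h
        · exact absurd ⟨i, by simp [hPos, h]⟩ hP
      · refine ⟨0, fun i => (horig _ i).2 ?_⟩
        rcases lt_trichotomy (a i) 0 with h | h | h
        · exact absurd ⟨i, by simp [hNeg, h]⟩ hN
        · rw [h, zero_mul]; exact hz i h
        · exact absurd ⟨i, by simp [hPos, h]⟩ hP
  · rintro ⟨s, hs⟩ k
    have hs' : ∀ i, a i * s ≤ g i := fun i => (horig s i).1 (hs i)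
    rcases k with i | ⟨i, j⟩
    · by_cases h0 : a i = 0
      · simp only [Sum.elim_inl, if_pos h0]
        have h1 := hs' i
        rw [h0, zero_mul] at h1
        simp only [hg] at h1
        linarith
      · simp [h0]
    · by_cases hij : 0 < a i ∧ a j < 0
      · simp only [Sum.elim_inr]
        rw [if_pos hij, if_pos hij, if_pos hij]
        rw [sub_dotProduct, smul_dotProduct, smul_dotProduct]
        simp only [smul_eq_mul]
        have h1 := mul_le_mul_of_nonneg_left (hs' j) hij.1.le
        have h2 := mul_le_mul_of_nonpos_left (hs' i) hij.2.le
        simp only [hg] at h1 h2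
        nlinarith [h1, h2]
      · simp [hij]


lemma fm_elim_all : ∀ (n : ℕ) {ι : Type} [Fintype ι] (A : ι → Fin n → ℝ) (c b : ι → ℝ),
    ∃ (κ : Type) (_ : Fintype κ) (α β : κ → ℝ),
      ∀ t : ℝ, (∃ x : Fin n → ℝ, ∀ i, A i ⬝ᵥ x + c i * t ≤ b i) ↔ ∀ k, α k * t ≤ β k := by
  intro n
  induction n with
  | zero =>
    intro ι _ A c b
    refine ⟨ι, inferInstance, c, b, fun t => ⟨?_, ?_⟩⟩
    · rintro ⟨x, hx⟩ i
      have := hx i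
      simpa [dotProduct] using this
    · intro h
      exact ⟨Fin.elim0, fun i => by simpa [dotProduct] using h i⟩
  | succ n ih =>
    intro ι _ A c b
    obtain ⟨A', c', b', hA'⟩ := fm_elim_var A c b
    obtain ⟨κ, instκ, α, β, hk⟩ := ih A' c' b'
    refine ⟨κ, instκ, α, β, fun t => ?_⟩
    rw [← hk t]
    constructor
    · rintro ⟨x, hx⟩
      refine ⟨x ∘ Fin.succ, (hA' t _).2 ⟨x 0, fun i => ?_⟩⟩
      have hc : Fin.cons (x 0) (x ∘ Fin.succ) = x := Fin.cons_self_tail x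
      rw [hc]; exact hx i
    · rintro ⟨y, hy⟩
      obtain ⟨s, hs⟩ := (hA' t y).1 hy
      exact ⟨Fin.cons s y, hs⟩

/-- Attainment for linear programs over polyhedra: a linear objective that is bounded
below on a nonempty polyhedron attains its minimum there. -/
theorem lp_attainment
    (m n : ℕ) (A : Matrix (Fin m) (Fin n) ℝ) (b : Fin m → ℝ) (c : Fin n → ℝ)
    (hne : {x : Fin n → ℝ | A.mulVec x ≤ b}.Nonempty)
    (hbdd : BddBelow ((fun x => c ⬝ᵥ x) '' {x : Fin n → ℝ | A.mulVec x ≤ b})) :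
    ∃ xs ∈ {x : Fin n → ℝ | A.mulVec x ≤ b},
      ∀ x ∈ {x : Fin n → ℝ | A.mulVec x ≤ b}, c ⬝ᵥ xs ≤ c ⬝ᵥ x := by
  classical
  -- the combined system: A x ≤ b and c ⬝ x ≤ t
  set AA : (Fin m ⊕ Unit) → Fin n → ℝ := Sum.elim (fun i => A i) (fun _ => c) with hAA
  set cc : (Fin m ⊕ Unit) → ℝ := Sum.elim (fun _ => 0) (fun _ => (-1 : ℝ)) with hcc
  set bb : (Fin m ⊕ Unit) → ℝ := Sum.elim b (fun _ => 0) with hbb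
  have hsys : ∀ (t : ℝ) (x : Fin n → ℝ),
      (∀ i, AA i ⬝ᵥ x + cc i * t ≤ bb i) ↔ (A.mulVec x ≤ b ∧ c ⬝ᵥ x ≤ t) := by
    intro t x
    constructor
    · intro h
      refine ⟨fun i => ?_, ?_⟩
      · have := h (Sum.inl i)
        simp [hAA, hcc, hbb, Matrix.mulVec, dotProduct] at this ⊢
        convert this using 2
      · have := h (Sum.inr ⟨⟩)
        simp [hAA, hcc, hbb] at this
        linarith
    · rintro ⟨h1, h2⟩ (i | u)
      · have := h1 i
        simp [hAA, hcc, hbb, Matrix.mulVec, dotProduct] at this ⊢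
        convert this using 2
      · simp [hAA, hcc, hbb]
        linarith
  obtain ⟨κ, instκ, α, β, hk⟩ := fm_elim_all n AA cc bb
  set J : Set ℝ := {t | ∃ x : Fin n → ℝ, A.mulVec x ≤ b ∧ c ⬝ᵥ x ≤ t} with hJ
  have hJeq : J = {t | ∀ k, α k * t ≤ β k} := by
    ext t
    simp only [hJ, Set.mem_setOf_eq]
    rw [← hk t]
    exact ⟨fun ⟨x, hx⟩ => ⟨x, (hsys t x).2 hx⟩, fun ⟨x, hx⟩ => ⟨x, (hsys t x).1 hx⟩⟩
  have hclosed : IsClosed J := by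
    rw [hJeq]
    have : {t : ℝ | ∀ k, α k * t ≤ β k} = ⋂ k, {t : ℝ | α k * t ≤ β k} := by
      ext t; simp
    rw [this]
    exact isClosed_iInter fun k =>
      isClosed_le (continuous_const.mul continuous_id) continuous_const
  obtain ⟨x0, hx0⟩ := hne
  have hJne : J.Nonempty := ⟨c ⬝ᵥ x0, x0, hx0, le_refl _⟩
  obtain ⟨B, hB⟩ := hbdd
  have hJbdd : BddBelow J := by
    refine ⟨B, fun t ht => ?_⟩
    obtain ⟨x, hx, hcx⟩ := ht
    have : B ≤ c ⬝ᵥ x := hB ⟨x, hx, rfl⟩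
    linarith
  have hmem : sInf J ∈ J := hclosed.csInf_mem hJne hJbdd
  obtain ⟨xs, hxs, hcxs⟩ := hmem
  refine ⟨xs, hxs, fun x hx => ?_⟩
  have : sInf J ≤ c ⬝ᵥ x := csInf_le hJbdd ⟨x, hx, le_refl _⟩
  linarith
end
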